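/- Let (Q,H) be a loop-free quiver with reduced homotopy, k a vertex, μ̃_k(Q,H) = (Q',H'), and Q† a quiver obtained from Q' by the maximal iterative deletion of 2-cycles lying in H'. Then the functor ψ: π(Q†) → π(Q')/H' induced by the inclusion Q† ⊆ Q' is full, i.e. surjective on all morphism sets. -/

import Mathlib

namespace CMu

/-- A (locally small) quiver with vertex type `V`: a type of arrows together with
source and target maps.  All quivers in a given statement share the vertex type. -/
structure Quiv (V : Type) where
  Arrow : Type
  src : Arrow → V
  tgt : Arrow → V

variable {V : Type}

namespace Quiv

/-- A quiver is loop-free if no arrow has equal source and target. -/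
def LoopFree (Q : Quiv V) : Prop := ∀ a : Q.Arrow, Q.src a ≠ Q.tgt a

/-- A quiver is `2`-acyclic if it contains no oriented `2`-cycle, i.e. there is no pair of
arrows `a, b` with `t a = s b` and `t b = s a` (a loop forms a `2`-cycle with itself). -/
def TwoAcyclic (Q : Quiv V) : Prop :=
  ∀ a b : Q.Arrow, Q.tgt a = Q.src b → Q.tgt b = Q.src a → False

/-- A quiver is locally finite if each vertex is the source (resp. target) of only
finitely many arrows. -/
def LocallyFinite (Q : Quiv V) : Prop :=
  ∀ v : V, {a : Q.Arrow | Q.src a = v}.Finite ∧ {a : Q.Arrow | Q.tgt a = v}.Finite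

/-- The number of arrows from `i` to `j`. -/
noncomputable def nArrows (Q : Quiv V) (i j : V) : ℕ :=
  Nat.card {a : Q.Arrow // Q.src a = i ∧ Q.tgt a = j}

end Quiv

/-- A step of a walk in the underlying graph of a quiver: an arrow traversed forwards,
or an arrow traversed backwards (its formal inverse). -/
inductive Step (Q : Quiv V) : V → V → Type where
  | fwd (a : Q.Arrow) : Step Q (Q.src a) (Q.tgt a)
  | bwd (a : Q.Arrow) : Step Q (Q.tgt a) (Q.src a)

/-- The inverse of a step. -/
def Step.inv {Q : Quiv V} : {x y : V} → Step Q x y → Step Q y x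
  | _, _, .fwd a => .bwd a
  | _, _, .bwd a => .fwd a

/-- A step is forward if it traverses an arrow in its own direction. -/
def Step.IsFwd {Q : Quiv V} : {x y : V} → Step Q x y → Prop
  | _, _, .fwd _ => True
  | _, _, .bwd _ => False

/-- A walk in (the underlying graph of) a quiver `Q` from `x` to `y`:
a word in the arrows of `Q` and their formal inverses. -/
inductive Walk (Q : Quiv V) : V → V → Type where
  | nil (v : V) : Walk Q v v
  | cons {x y z : V} (e : Step Q x y) (w : Walk Q y z) : Walk Q x z

namespace Walk

/-- Composition (concatenation) of walks. -/
def comp {Q : Quiv V} : {x y z : V} → Walk Q x y → Walk Q y z → Walk Q x z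
  | _, _, _, .nil _, w => w
  | _, _, _, .cons e u, w => .cons e (comp u w)

/-- The walk consisting of a single step. -/
def single {Q : Quiv V} {x y : V} (e : Step Q x y) : Walk Q x y := .cons e (.nil _)

/-- The inverse (reversal) of a walk. -/
def inv {Q : Quiv V} : {x y : V} → Walk Q x y → Walk Q y x
  | _, _, .nil v => .nil v
  | _, _, .cons e u => (inv u).comp (single e.inv)

/-- Transport a walk along equalities of its endpoints. -/
def cast {Q : Quiv V} {x y x' y' : V} (hx : x = x') (hy : y = y') (w : Walk Q x y) :
    Walk Q x' y' := by subst hx; subst hy; exact w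

/-- A walk is a (directed) path if all of its steps are forward. -/
def AllFwd {Q : Quiv V} : {x y : V} → Walk Q x y → Prop
  | _, _, .nil _ => True
  | _, _, .cons e w => e.IsFwd ∧ AllFwd w

end Walk

/-- A quiver is acyclic if it contains no (nontrivial) oriented cycle. -/
def Quiv.Acyclic (Q : Quiv V) : Prop :=
  ∀ (v : V) (w : Walk Q v v), w.AllFwd → w = .nil v

/-- A quiver is connected if any two vertices are joined by a walk. -/
def Quiv.Connected (Q : Quiv V) : Prop := ∀ x y : V, Nonempty (Walk Q x y)

/-- Free homotopy of walks: the equivalence relation on walks generated by cancelling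
`e ⬝ e⁻¹`.  Two walks are homotopic iff they have the same reduction, so that the morphisms
of the free groupoid `π(Q)` from `x` to `y` are the homotopy classes of walks from `x` to `y`. -/
inductive WalkHtpy (Q : Quiv V) : {x y : V} → Walk Q x y → Walk Q x y → Prop
  | refl {x y : V} (w : Walk Q x y) : WalkHtpy Q w w
  | symm {x y : V} {w u : Walk Q x y} : WalkHtpy Q w u → WalkHtpy Q u w
  | trans {x y : V} {w u t : Walk Q x y} : WalkHtpy Q w u → WalkHtpy Q u t → WalkHtpy Q w t
  | cancel {x y z : V} (e : Step Q x y) (w : Walk Q x z) :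
      WalkHtpy Q (.cons e (.cons e.inv w)) w
  | congr {x y z : V} (e : Step Q x y) {w u : Walk Q y z} :
      WalkHtpy Q w u → WalkHtpy Q (.cons e w) (.cons e u)

/-- A family of sets of cyclic walks, one at each vertex.  Such a family, when it satisfies
`IsHomotopy`, encodes a normal subgroupoid (a *homotopy*) `H` of the free groupoid `π(Q)`:
`H(v,v)` is the set of homotopy classes of the walks in the family at `v`. -/
def HSet (Q : Quiv V) := ∀ v : V, Set (Walk Q v v)

/-- `H` is a homotopy on `Q` (a normal subgroupoid of the free groupoid `π(Q)`):
each `H v` is closed under free homotopy of walks, contains the identity, is closed under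
composition and inverse (so it determines a subgroup of `π₁(Q,v) = π(Q)(v,v)`), and the family
is closed under conjugation by arbitrary walks. -/
structure IsHomotopy (Q : Quiv V) (H : HSet Q) : Prop where
  htpy_mem : ∀ {v : V} {w u : Walk Q v v}, WalkHtpy Q w u → w ∈ H v → u ∈ H v
  nil_mem : ∀ v : V, Walk.nil v ∈ H v
  comp_mem : ∀ {v : V} {w u : Walk Q v v}, w ∈ H v → u ∈ H v → w.comp u ∈ H v
  inv_mem : ∀ {v : V} {w : Walk Q v v}, w ∈ H v → w.inv ∈ H v
  conj_mem : ∀ {x y : V} (g : Walk Q x y) {w : Walk Q x x},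
    w ∈ H x → (g.inv.comp (w.comp g)) ∈ H y

/-- The oriented `2`-cycle determined by arrows `a : i → j` and `b : j → i`, as a cyclic
walk based at `i = s a`. -/
def twoCycle {Q : Quiv V} (a b : Q.Arrow) (h : Q.tgt a = Q.src b) (h' : Q.tgt b = Q.src a) :
    Walk Q (Q.src a) (Q.src a) :=
  Walk.cons (.fwd a) ((Walk.single (.fwd b)).cast h.symm h')

/-- A homotopy is reduced if it contains no oriented `2`-cycle of `Q`. -/
def IsReducedH (Q : Quiv V) (H : HSet Q) : Prop :=
  ∀ (a b : Q.Arrow) (h : Q.tgt a = Q.src b) (h' : Q.tgt b = Q.src a),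
    twoCycle a b h h' ∉ H (Q.src a)

/-- Two walks `w, u : x → y` represent the same morphism of the quotient groupoid
`π(Q)/H` iff `w⁻¹ u ∈ H`. -/
def HEquiv {Q : Quiv V} (H : HSet Q) {x y : V} (w u : Walk Q x y) : Prop :=
  w.inv.comp u ∈ H y

/-- The trivial homotopy `𝟙`: only the identity morphisms, i.e. only walks homotopic
to the constant walk. -/
def trivH (Q : Quiv V) : HSet Q := fun v => {w | WalkHtpy Q w (.nil v)}

/-- The maximal homotopy `π(Q)`: all cyclic walks. -/
def maxH (Q : Quiv V) : HSet Q := fun _ => Set.univ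

/-- The normal subgroupoid (homotopy) generated by a family `S` of cyclic walks. -/
def genH (Q : Quiv V) (S : HSet Q) : HSet Q := fun v =>
  {w | ∀ K : HSet Q, IsHomotopy Q K → (∀ x, S x ⊆ K x) → w ∈ K v}

/-- The squares of all cyclic walks; `genH Q (sqGens Q)` is the normal subgroupoid `π(Q)²`. -/
def sqGens (Q : Quiv V) : HSet Q := fun v => {w | ∃ u : Walk Q v v, w = u.comp u}

/-- A morphism from the free groupoid on `Q` to the free groupoid on `R` (both over the same
vertex type, fixing all vertices), given by a choice of a walk in `R` for every arrow of `Q`. -/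
structure QMap (Q R : Quiv V) where
  toWalk : (a : Q.Arrow) → Walk R (Q.src a) (Q.tgt a)

namespace QMap

/-- The image of a step. -/
def mapStep {Q R : Quiv V} (F : QMap Q R) : {x y : V} → Step Q x y → Walk R x y
  | _, _, .fwd a => F.toWalk a
  | _, _, .bwd a => (F.toWalk a).inv

/-- The induced map on walks. -/
def mapWalk {Q R : Quiv V} (F : QMap Q R) : {x y : V} → Walk Q x y → Walk R x y
  | _, _, .nil v => .nil v
  | _, _, .cons e w => (F.mapStep e).comp (F.mapWalk w)

/-- Composition of `QMap`s. -/
def comp {Q R S : Quiv V} (F : QMap Q R) (G : QMap R S) : QMap Q S :=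
  ⟨fun a => G.mapWalk (F.toWalk a)⟩

end QMap

/-- The kernel, relative to a homotopy `H` on `R`, of the functor `π(Q) → π(R)/H`
induced by a `QMap`: all cyclic walks whose image lies in `H`. -/
def kerH {Q R : Quiv V} (F : QMap Q R) (H : HSet R) : HSet Q :=
  fun v => {w | F.mapWalk w ∈ H v}

/-- A (vertex-fixing) isomorphism of quivers over the same vertex type. -/
structure QIso (Q R : Quiv V) where
  arr : Q.Arrow ≃ R.Arrow
  src_eq : ∀ a, R.src (arr a) = Q.src a
  tgt_eq : ∀ a, R.tgt (arr a) = Q.tgt a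

/-- The `QMap` underlying a quiver isomorphism. -/
def QIso.toQMap {Q R : Quiv V} (f : QIso Q R) : QMap Q R :=
  ⟨fun a => (Walk.single (.fwd (f.arr a))).cast (f.src_eq a) (f.tgt_eq a)⟩

/-- The pre-mutation `μ̃_k(Q)` of a loop-free quiver `Q` at the vertex `k`: arrows of `Q` not
incident to `k` are kept, arrows incident to `k` are replaced by reversed arrows `γ*`, and
for every pair of arrows `α, β` with `s α = t β = k` and `s β ≠ t α` a new composite arrow
`[αβ] : s β → t α` is added. -/
def preMut (Q : Quiv V) (k : V) : Quiv V where
  Arrow := {a : Q.Arrow // Q.src a ≠ k ∧ Q.tgt a ≠ k} ⊕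
    ({a : Q.Arrow // Q.src a = k ∨ Q.tgt a = k} ⊕
     {p : Q.Arrow × Q.Arrow // Q.src p.1 = k ∧ Q.tgt p.2 = k ∧ Q.src p.2 ≠ Q.tgt p.1})
  src x := match x with
    | .inl a => Q.src a.1
    | .inr (.inl a) => Q.tgt a.1
    | .inr (.inr p) => Q.src p.1.2
  tgt x := match x with
    | .inl a => Q.tgt a.1
    | .inr (.inl a) => Q.src a.1
    | .inr (.inr p) => Q.tgt p.1.1

/-- The canonical functor `φ : π(μ̃_k Q) → π(Q)` (to be composed with `π(Q) → π(Q)/H`):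
it fixes all vertices, sends a kept arrow `γ` to `γ`, a reversed arrow `γ*` to `γ⁻¹`, and a
composite arrow `[αβ]` to the walk `αβ`. -/
def phiQMap (Q : Quiv V) (k : V) : QMap (preMut Q k) Q where
  toWalk x := match x with
    | .inl a => Walk.single (.fwd a.1)
    | .inr (.inl a) => Walk.single (.bwd a.1)
    | .inr (.inr p) => Walk.cons (.fwd p.1.2)
        ((Walk.single (.fwd p.1.1)).cast (p.2.1.trans p.2.2.1.symm) rfl)

/-- The homotopy `H' = ker (φ : π(μ̃_k Q) → π(Q)/H)` of the pre-mutation `μ̃_k(Q,H) = (Q',H')`. -/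
def preH (Q : Quiv V) (H : HSet Q) (k : V) : HSet (preMut Q k) := kerH (phiQMap Q k) H

/-- The subquiver of `R` obtained by deleting the arrows in `S`. -/
def restrictQ (R : Quiv V) (S : Set R.Arrow) : Quiv V where
  Arrow := {a : R.Arrow // a ∉ S}
  src a := R.src a.1
  tgt a := R.tgt a.1

/-- The inclusion `QMap` of a subquiver. -/
def inclQMap (R : Quiv V) (S : Set R.Arrow) : QMap (restrictQ R S) R :=
  ⟨fun a => Walk.single (.fwd a.1)⟩

/-- A deletion of `2`-cycles lying in a homotopy `H` on a quiver `R`, away from the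
vertex `k`: a collection of pairwise disjoint pairs of opposite arrows `(γ, δ)` between two
distinct vertices `i ≠ j`, both different from `k`, such that each composite `2`-cycle `γδ`
lies in `H`. -/
structure TwoCycleDeletion (R : Quiv V) (H : HSet R) (k : V) where
  pairs : Set (R.Arrow × R.Arrow)
  endpoints : ∀ q ∈ pairs, R.tgt q.1 = R.src q.2 ∧ R.tgt q.2 = R.src q.1
  src_ne_k : ∀ q ∈ pairs, R.src q.1 ≠ k
  tgt_ne_k : ∀ q ∈ pairs, R.tgt q.1 ≠ k
  src_ne_tgt : ∀ q ∈ pairs, R.src q.1 ≠ R.tgt q.1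
  mem_H : ∀ q ∈ pairs, ∀ (h : R.tgt q.1 = R.src q.2) (h' : R.tgt q.2 = R.src q.1),
    twoCycle q.1 q.2 h h' ∈ H (R.src q.1)
  disjoint : ∀ q ∈ pairs, ∀ q' ∈ pairs, q ≠ q' →
    q.1 ≠ q'.1 ∧ q.1 ≠ q'.2 ∧ q.2 ≠ q'.1 ∧ q.2 ≠ q'.2

namespace TwoCycleDeletion

variable {R : Quiv V} {H : HSet R} {k : V}

/-- The set of deleted arrows. -/
def deleted (D : TwoCycleDeletion R H k) : Set R.Arrow :=
  {a | ∃ q ∈ D.pairs, a = q.1 ∨ a = q.2}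

/-- A deletion is maximal if no `2`-cycle lying in `H` (between two distinct vertices, both
different from `k`) survives it.  This is the result of the iterative deletion procedure. -/
def Maximal (D : TwoCycleDeletion R H k) : Prop :=
  ∀ γ δ : R.Arrow, γ ∉ D.deleted → δ ∉ D.deleted →
    R.src γ ≠ k → R.tgt γ ≠ k → R.src γ ≠ R.tgt γ →
    ∀ (h : R.tgt γ = R.src δ) (h' : R.tgt δ = R.src γ),
      twoCycle γ δ h h' ∉ H (R.src γ)

end TwoCycleDeletion

/-- The quiver `Q†` of the mutation `μ_k(Q,H) = (Q†,H†)` determined by a choice `D` of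
deleted `2`-cycles. -/
def mutQuiv (Q : Quiv V) (H : HSet Q) (k : V)
    (D : TwoCycleDeletion (preMut Q k) (preH Q H k) k) : Quiv V :=
  restrictQ (preMut Q k) D.deleted

/-- The homotopy `H† = ker (ψ : π(Q†) → π(Q')/H')` of the mutation `μ_k(Q,H) = (Q†,H†)`,
where `ψ` is induced by the inclusion `Q† ⊆ Q'`. -/
def mutH (Q : Quiv V) (H : HSet Q) (k : V)
    (D : TwoCycleDeletion (preMut Q k) (preH Q H k) k) : HSet (mutQuiv Q H k D) :=
  kerH (inclQMap (preMut Q k) D.deleted) (preH Q H k)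

/-- `(R, K)` is (isomorphic, by a vertex-fixing isomorphism matching the homotopies, to)
the mutation `μ_k(Q, H)` of the quiver with homotopy `(Q, H)` in direction `k`. -/
def IsMutationStep (Q : Quiv V) (H : HSet Q) (k : V) (R : Quiv V) (K : HSet R) : Prop :=
  ∃ D : TwoCycleDeletion (preMut Q k) (preH Q H k) k, D.Maximal ∧
    ∃ f : QIso (mutQuiv Q H k D) R,
      ∀ (v : V) (w : Walk (mutQuiv Q H k D) v v),
        w ∈ mutH Q H k D v ↔ f.toQMap.mapWalk w ∈ K v

/-- A `QMap` `F : π(Q) → π(R)` induces an isomorphism of quotient groupoids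
`π(Q)/H_Q ≅ π(R)/H_R` (it is the identity on objects, well defined, full and faithful
on all morphism sets). -/
structure InducesQuotIso {Q R : Quiv V} (F : QMap Q R) (HQ : HSet Q) (HR : HSet R) : Prop where
  maps : ∀ {x y : V} (w u : Walk Q x y), HEquiv HQ w u → HEquiv HR (F.mapWalk w) (F.mapWalk u)
  full : ∀ {x y : V} (w : Walk R x y), ∃ u : Walk Q x y, HEquiv HR (F.mapWalk u) w
  faithful : ∀ {x y : V} (w u : Walk Q x y),
    HEquiv HR (F.mapWalk w) (F.mapWalk u) → HEquiv HQ w u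

/-- A deletion datum for the Fomin–Zelevinsky mutation: a collection of pairwise disjoint
pairs of opposite arrows (oriented `2`-cycles). -/
structure FZDeletion (R : Quiv V) where
  pairs : Set (R.Arrow × R.Arrow)
  endpoints : ∀ q ∈ pairs, R.tgt q.1 = R.src q.2 ∧ R.tgt q.2 = R.src q.1
  disjoint : ∀ q ∈ pairs, ∀ q' ∈ pairs, q ≠ q' →
    q.1 ≠ q'.1 ∧ q.1 ≠ q'.2 ∧ q.2 ≠ q'.1 ∧ q.2 ≠ q'.2

/-- The arrows deleted by an `FZDeletion`. -/
def FZDeletion.deleted {R : Quiv V} (D : FZDeletion R) : Set R.Arrow :=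
  {a | ∃ q ∈ D.pairs, a = q.1 ∨ a = q.2}

/-- `R` is (a representative of) the Fomin–Zelevinsky mutation `μ^FZ_k(Q)` of the `2`-acyclic
quiver `Q`: it is obtained from the pre-mutation of `Q` at `k` by deleting a maximal collection
of oriented `2`-cycles (so that the result is `2`-acyclic), up to vertex-fixing isomorphism. -/
def IsFZMut (Q : Quiv V) (k : V) (R : Quiv V) : Prop :=
  ∃ D : FZDeletion (preMut Q k),
    (restrictQ (preMut Q k) D.deleted).TwoAcyclic ∧
    Nonempty (QIso (restrictQ (preMut Q k) D.deleted) R)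

/-- Two homotopies `H, H'` on `Q` are equivalent if, for every mutation sequence, the
underlying quivers of the corresponding mutated quivers with homotopies are isomorphic by
vertex-fixing isomorphisms. -/
def HomotopyEquivalent (Q : Quiv V) (H H' : HSet Q) : Prop :=
  ∀ (ℓ : ℕ) (ks : ℕ → V)
    (Qs : ℕ → Quiv V) (Hs : ∀ i, HSet (Qs i))
    (Qs' : ℕ → Quiv V) (Hs' : ∀ i, HSet (Qs' i)),
    Qs 0 = Q → HEq (Hs 0) H → Qs' 0 = Q → HEq (Hs' 0) H' →
    (∀ i < ℓ, IsMutationStep (Qs i) (Hs i) (ks i) (Qs (i + 1)) (Hs (i + 1))) →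
    (∀ i < ℓ, IsMutationStep (Qs' i) (Hs' i) (ks i) (Qs' (i + 1)) (Hs' (i + 1))) →
    Nonempty (QIso (Qs ℓ) (Qs' ℓ))

/-- The relation on vertices generated by the arrows (connectivity). -/
def adjRel (Q : Quiv V) : V → V → Prop := fun x y =>
  ∃ a : Q.Arrow, (Q.src a = x ∧ Q.tgt a = y) ∨ (Q.src a = y ∧ Q.tgt a = x)

/-- The number of connected components of the underlying graph. -/
noncomputable def componentCount (Q : Quiv V) : ℕ := Nat.card (Quot (adjRel Q))

/-- The rank of the fundamental group of (the underlying graph of) a finite quiver: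
`|Q₁| - |Q₀| + (number of connected components)`. -/
noncomputable def fundGroupRank (Q : Quiv V) : ℤ :=
  (Nat.card Q.Arrow : ℤ) - (Nat.card V : ℤ) + (componentCount Q : ℤ)

end CMu

/-! Since `H'` is a homotopy, `ψ` is full as soon as the class of every arrow of `Q'` lies in its
image.  Arrows of `Q†` are their own lifts, and no reversed arrow `γ*` is deleted, deletions
avoiding `k`.  A composite arrow `[αβ]` is `H'`-equivalent to `β*⁻¹ α*⁻¹`, both being sent to
`αβ` by `φ`.  A deleted arrow `γ` of `Q` has a partner `δ` with `γδ ∈ H'`; as `H` is reduced and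
`γ` avoids `k`, `δ` is a composite `[αβ]`, and then `γβα ∈ H` makes `γ` `H'`-equivalent to
`α* β*`. -/

namespace CMu

variable {V : Type}

theorem Step.inv_inv {Q : Quiv V} : ∀ {x y : V} (e : Step Q x y), e.inv.inv = e
  | _, _, .fwd _ => rfl
  | _, _, .bwd _ => rfl

namespace Walk

variable {Q : Quiv V}

theorem comp_nil : ∀ {x y : V} (w : Walk Q x y), w.comp (.nil y) = w
  | _, _, .nil _ => rfl
  | _, _, .cons e u => congrArg (cons e) (comp_nil u)

theorem comp_assoc : ∀ {x y z v : V} (a : Walk Q x y) (b : Walk Q y z) (c : Walk Q z v),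
    (a.comp b).comp c = a.comp (b.comp c)
  | _, _, _, _, .nil _, _, _ => rfl
  | _, _, _, _, .cons e a, b, c => congrArg (cons e) (comp_assoc a b c)

theorem inv_comp : ∀ {x y z : V} (a : Walk Q x y) (b : Walk Q y z),
    (a.comp b).inv = b.inv.comp a.inv
  | _, _, _, .nil _, b => (comp_nil _).symm
  | _, _, _, .cons e a, b => by
      change (a.comp b).inv.comp (single e.inv) = b.inv.comp (a.inv.comp (single e.inv))
      rw [inv_comp a b, comp_assoc]

theorem inv_inv : ∀ {x y : V} (w : Walk Q x y), w.inv.inv = w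
  | _, _, .nil _ => rfl
  | _, _, .cons e w => by
      change (w.inv.comp (single e.inv)).inv = cons e w
      rw [inv_comp, inv_inv w]
      change cons e.inv.inv w = cons e w
      rw [Step.inv_inv]

theorem inv_cast {x y x' y' : V} (hx : x = x') (hy : y = y') (w : Walk Q x y) :
    (w.cast hx hy).inv = w.inv.cast hy hx := by
  subst hx hy; rfl

def pair {x y y' z : V} (e : Step Q x y) (f : Step Q y' z) (h : y = y') : Walk Q x z :=
  cons e ((single f).cast h.symm rfl)

theorem inv_pair {x y y' z : V} (e : Step Q x y) (f : Step Q y' z) (h : y = y') :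
    (pair e f h).inv = pair f.inv e.inv h.symm := by
  subst h; rfl

theorem htpy_comp_left : ∀ {x y z : V} (t : Walk Q x y) {w u : Walk Q y z},
    WalkHtpy Q w u → WalkHtpy Q (t.comp w) (t.comp u)
  | _, _, _, .nil _, _, _, h => h
  | _, _, _, .cons e t, _, _, h => .congr e (htpy_comp_left t h)

theorem htpy_inv_comp : ∀ {x y z : V} (w : Walk Q x y) (t : Walk Q y z),
    WalkHtpy Q (w.inv.comp (w.comp t)) t
  | _, _, _, .nil _, t => .refl t
  | _, _, _, .cons e w, t => by
    change WalkHtpy Q ((w.inv.comp (single e.inv)).comp (cons e (w.comp t))) t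
    rw [comp_assoc]
    have hcancel : WalkHtpy Q (cons e.inv (cons e (w.comp t))) (w.comp t) := by
      simpa only [Step.inv_inv] using WalkHtpy.cancel e.inv (w.comp t)
    exact (htpy_comp_left w.inv hcancel).trans (htpy_inv_comp w t)

theorem htpy_comp_inv {x y z : V} (w : Walk Q x y) (t : Walk Q x z) :
    WalkHtpy Q (w.comp (w.inv.comp t)) t := by
  simpa only [inv_inv] using htpy_inv_comp w.inv t

theorem htpy_inv_self {x y : V} (w : Walk Q x y) : WalkHtpy Q (w.inv.comp w) (.nil y) := by
  simpa only [comp_nil] using htpy_inv_comp w (.nil y)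

end Walk

namespace QMap

variable {Q R : Quiv V} (F : QMap Q R)

theorem mapStep_inv : ∀ {x y : V} (e : Step Q x y), F.mapStep e.inv = (F.mapStep e).inv
  | _, _, .fwd _ => rfl
  | _, _, .bwd _ => (Walk.inv_inv _).symm

theorem mapWalk_single {x y : V} (e : Step Q x y) : F.mapWalk (.single e) = F.mapStep e :=
  Walk.comp_nil _

theorem mapWalk_comp : ∀ {x y z : V} (w : Walk Q x y) (u : Walk Q y z),
    F.mapWalk (w.comp u) = (F.mapWalk w).comp (F.mapWalk u)
  | _, _, _, .nil _, _ => rfl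
  | _, _, _, .cons e w, u => by
      change (F.mapStep e).comp (F.mapWalk (w.comp u)) =
        ((F.mapStep e).comp (F.mapWalk w)).comp (F.mapWalk u)
      rw [mapWalk_comp w u, Walk.comp_assoc]

theorem mapWalk_inv : ∀ {x y : V} (w : Walk Q x y), F.mapWalk w.inv = (F.mapWalk w).inv
  | _, _, .nil _ => rfl
  | _, _, .cons e w => by
      change F.mapWalk (w.inv.comp (.single e.inv)) = ((F.mapStep e).comp (F.mapWalk w)).inv
      rw [mapWalk_comp, mapWalk_inv w, Walk.inv_comp, mapWalk_single, mapStep_inv]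

theorem mapWalk_cast {x y x' y' : V} (hx : x = x') (hy : y = y') (w : Walk Q x y) :
    F.mapWalk (w.cast hx hy) = (F.mapWalk w).cast hx hy := by
  subst hx hy; rfl

theorem mapWalk_pair {x y y' z : V} (e : Step Q x y) (f : Step Q y' z) (h : y = y') :
    F.mapWalk (.pair e f h) = (F.mapStep e).comp ((F.mapStep f).cast h.symm rfl) := by
  subst h; exact congrArg _ (Walk.comp_nil _)

theorem mapWalk_twoCycle (c d : Q.Arrow) (h : Q.tgt c = Q.src d) (h' : Q.tgt d = Q.src c) :
    F.mapWalk (twoCycle c d h h') = (F.toWalk c).comp ((F.toWalk d).cast h.symm h') := by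
  change (F.toWalk c).comp (F.mapWalk ((Walk.single (.fwd d)).cast h.symm h')) = _
  rw [mapWalk_cast, mapWalk_single]; rfl

theorem mapWalk_htpy {x y : V} {w u : Walk Q x y} (h : WalkHtpy Q w u) :
    WalkHtpy R (F.mapWalk w) (F.mapWalk u) := by
  induction h with
  | refl => exact .refl _
  | symm _ ih => exact ih.symm
  | trans _ _ ih₁ ih₂ => exact ih₁.trans ih₂
  | cancel e w =>
    change WalkHtpy R ((F.mapStep e).comp ((F.mapStep e.inv).comp (F.mapWalk w))) (F.mapWalk w)
    rw [mapStep_inv]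
    exact Walk.htpy_comp_inv _ _
  | congr e _ ih => exact Walk.htpy_comp_left (F.mapStep e) ih

end QMap

namespace IsHomotopy

variable {Q : Quiv V} {H : HSet Q} (hH : IsHomotopy Q H)
include hH

theorem comp_mem_comm {x y : V} {w : Walk Q x y} {u : Walk Q y x} (h : w.comp u ∈ H x) :
    u.comp w ∈ H y := by
  refine hH.htpy_mem ?_ (hH.conj_mem w h)
  rw [Walk.comp_assoc]
  exact Walk.htpy_inv_comp w (u.comp w)

theorem hequiv_refl {x y : V} (w : Walk Q x y) : HEquiv H w w :=
  hH.htpy_mem (Walk.htpy_inv_self w).symm (hH.nil_mem y)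

theorem hequiv_comp {x y z : V} {w₁ u₁ : Walk Q x y} {w₂ u₂ : Walk Q y z}
    (h₁ : HEquiv H w₁ u₁) (h₂ : HEquiv H w₂ u₂) : HEquiv H (w₁.comp w₂) (u₁.comp u₂) := by
  refine hH.htpy_mem ?_ (hH.comp_mem (hH.conj_mem w₂ h₁) h₂)
  rw [Walk.inv_comp]
  simp only [Walk.comp_assoc]
  exact Walk.htpy_comp_left _ (Walk.htpy_comp_left _ (Walk.htpy_comp_left _
    (Walk.htpy_comp_inv _ _)))

theorem hequiv_inv {x y : V} {w u : Walk Q x y} (h : HEquiv H w u) : HEquiv H w.inv u.inv := by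
  have hinv : u.inv.comp w ∈ H y := by
    simpa only [Walk.inv_comp, Walk.inv_inv] using hH.inv_mem h
  unfold HEquiv
  rw [Walk.inv_inv]
  exact hH.comp_mem_comm hinv

theorem twoCycle_comm {c d : Q.Arrow} (h : Q.tgt c = Q.src d) (h' : Q.tgt d = Q.src c)
    (hcd : twoCycle c d h h' ∈ H (Q.src c)) : twoCycle d c h' h ∈ H (Q.src d) := by
  have rotate : ∀ {x y y' z : V} (e : Step Q x y) (f : Step Q y' z) (h : y = y') (h' : z = x),
      .cons e ((Walk.single f).cast h.symm h') ∈ H x →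
        .cons f ((Walk.single e).cast h'.symm h) ∈ H y' := by
    intro x y y' z e f h h' hm
    subst h h'
    exact hH.comp_mem_comm (w := .single e) (u := .single f) hm
  exact rotate _ _ h h' hcd

end IsHomotopy

theorem kerH_isHomotopy {Q R : Quiv V} (F : QMap Q R) {H : HSet R} (hH : IsHomotopy R H) :
    IsHomotopy Q (kerH F H) where
  htpy_mem h hw := hH.htpy_mem (F.mapWalk_htpy h) hw
  nil_mem v := hH.nil_mem v
  comp_mem {v w u} hw hu := by
    change F.mapWalk (w.comp u) ∈ H v
    rw [F.mapWalk_comp]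
    exact hH.comp_mem hw hu
  inv_mem {v w} hw := by
    change F.mapWalk w.inv ∈ H v
    rw [F.mapWalk_inv]
    exact hH.inv_mem hw
  conj_mem {x y} g {w} hw := by
    change F.mapWalk (g.inv.comp (w.comp g)) ∈ H y
    rw [F.mapWalk_comp, F.mapWalk_comp, F.mapWalk_inv]
    exact hH.conj_mem (F.mapWalk g) hw

theorem hequiv_kerH_iff {Q R : Quiv V} (F : QMap Q R) (H : HSet R) {x y : V}
    (w u : Walk Q x y) : HEquiv (kerH F H) w u ↔ HEquiv H (F.mapWalk w) (F.mapWalk u) := by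
  change F.mapWalk (w.inv.comp u) ∈ H y ↔ _
  rw [F.mapWalk_comp, F.mapWalk_inv]
  rfl

theorem twoCycle_mem_kerH_iff {Q R : Quiv V} {F : QMap Q R} {H : HSet R} (c d : Q.Arrow)
    (h : Q.tgt c = Q.src d) (h' : Q.tgt d = Q.src c) :
    twoCycle c d h h' ∈ kerH F H (Q.src c) ↔
      (F.toWalk c).comp ((F.toWalk d).cast h.symm h') ∈ H (Q.src c) :=
  Iff.of_eq (congrArg (· ∈ H (Q.src c)) (F.mapWalk_twoCycle c d h h'))

namespace QMap

variable {Q R : Quiv V} (F : QMap Q R) (H : HSet R)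

/-- `F` induces a full functor `π(Q) → π(R)/H`. -/
def Full : Prop := ∀ (x y : V) (w : Walk R x y), ∃ u : Walk Q x y, HEquiv H (F.mapWalk u) w

def ArrowInRange (c : R.Arrow) : Prop :=
  ∃ u : Walk Q (R.src c) (R.tgt c), HEquiv H (F.mapWalk u) (.single (.fwd c))

variable {F H}

theorem full_of_forall_arrowInRange (hH : IsHomotopy R H) (hF : ∀ c, F.ArrowInRange H c) :
    F.Full H := by
  intro x y w
  induction w with
  | nil v => exact ⟨.nil v, hH.hequiv_refl _⟩
  | cons e w ih =>
    obtain ⟨u, hu⟩ := ih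
    obtain ⟨ue, hue⟩ : ∃ ue, HEquiv H (F.mapWalk ue) (.single e) := by
      cases e with
      | fwd c => exact hF c
      | bwd c =>
        obtain ⟨ue, hue⟩ := hF c
        exact ⟨ue.inv, by rw [F.mapWalk_inv]; exact hH.hequiv_inv hue⟩
    exact ⟨ue.comp u, by rw [F.mapWalk_comp]; exact hH.hequiv_comp hue hu⟩

end QMap

theorem inclQMap_arrowInRange {R : Quiv V} {S : Set R.Arrow} {H : HSet R}
    (hH : IsHomotopy R H) {c : R.Arrow} (hc : c ∉ S) : (inclQMap R S).ArrowInRange H c :=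
  ⟨.single (Step.fwd (Q := restrictQ R S) ⟨c, hc⟩), hH.hequiv_refl _⟩

namespace TwoCycleDeletion

variable {R : Quiv V} {K : HSet R} {k : V} (D : TwoCycleDeletion R K k)

theorem src_ne_and_tgt_ne_of_mem_deleted {a : R.Arrow} (ha : a ∈ D.deleted) :
    R.src a ≠ k ∧ R.tgt a ≠ k := by
  obtain ⟨q, hq, rfl | rfl⟩ := ha
  · exact ⟨D.src_ne_k q hq, D.tgt_ne_k q hq⟩
  · obtain ⟨h, h'⟩ := D.endpoints q hq
    exact ⟨h ▸ D.tgt_ne_k q hq, h' ▸ D.src_ne_k q hq⟩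

theorem exists_twoCycle_mem (hK : IsHomotopy R K) {c : R.Arrow} (hc : c ∈ D.deleted) :
    ∃ (d : R.Arrow) (h : R.tgt c = R.src d) (h' : R.tgt d = R.src c),
      twoCycle c d h h' ∈ K (R.src c) := by
  obtain ⟨q, hq, rfl | rfl⟩ := hc
  · exact ⟨q.2, (D.endpoints q hq).1, (D.endpoints q hq).2, D.mem_H q hq _ _⟩
  · exact ⟨q.1, (D.endpoints q hq).2, (D.endpoints q hq).1,
      hK.twoCycle_comm _ _ (D.mem_H q hq _ _)⟩

theorem reversed_not_mem_deleted {Q : Quiv V} {K : HSet (preMut Q k)}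
    (D : TwoCycleDeletion (preMut Q k) K k) (a : {a : Q.Arrow // Q.src a = k ∨ Q.tgt a = k}) :
    (.inr (.inl a) : (preMut Q k).Arrow) ∉ D.deleted := fun ha =>
  have ⟨hs, ht⟩ := D.src_ne_and_tgt_ne_of_mem_deleted ha
  a.2.elim ht hs

end TwoCycleDeletion

section Mutation

variable {Q : Quiv V} {H : HSet Q} {k : V} (D : TwoCycleDeletion (preMut Q k) (preH Q H k) k)

theorem preH_isHomotopy (hH : IsHomotopy Q H) : IsHomotopy (preMut Q k) (preH Q H k) :=
  kerH_isHomotopy _ hH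

def reversedArrow (a : {a : Q.Arrow // Q.src a = k ∨ Q.tgt a = k}) :
    (restrictQ (preMut Q k) D.deleted).Arrow :=
  ⟨.inr (.inl a), D.reversed_not_mem_deleted a⟩

variable (p : {p : Q.Arrow × Q.Arrow // Q.src p.1 = k ∧ Q.tgt p.2 = k ∧ Q.src p.2 ≠ Q.tgt p.1})

theorem arrowInRange_composite (hH : IsHomotopy Q H) :
    (inclQMap (preMut Q k) D.deleted).ArrowInRange (preH Q H k) (.inr (.inr p)) := by
  refine ⟨.pair (.bwd (reversedArrow D ⟨p.1.2, .inr p.2.2.1⟩))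
    (.bwd (reversedArrow D ⟨p.1.1, .inl p.2.1⟩)) (p.2.2.1.trans p.2.1.symm), ?_⟩
  refine (hequiv_kerH_iff (phiQMap Q k) H _ _).2 ?_
  erw [QMap.mapWalk_single, QMap.mapWalk_pair, QMap.mapWalk_comp, QMap.mapWalk_cast]
  exact hH.hequiv_refl _

theorem arrowInRange_of_twoCycle_composite (hH : IsHomotopy Q H)
    (a : {a : Q.Arrow // Q.src a ≠ k ∧ Q.tgt a ≠ k})
    (h : Q.tgt a.1 = Q.src p.1.2) (h' : Q.tgt p.1.1 = Q.src a.1)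
    (hm : twoCycle (Q := preMut Q k) (Sum.inl a) (Sum.inr (Sum.inr p)) h h' ∈
      preH Q H k (Q.src a.1)) :
    (inclQMap (preMut Q k) D.deleted).ArrowInRange (preH Q H k) (.inl a) := by
  have hβα : Q.tgt p.1.2 = Q.src p.1.1 := p.2.2.1.trans p.2.1.symm
  have hm' : (Walk.single (.fwd a.1)).comp
      ((Walk.pair (.fwd p.1.2) (.fwd p.1.1) hβα).cast h.symm h') ∈ H (Q.src a.1) :=
    (twoCycle_mem_kerH_iff (Q := preMut Q k) (Sum.inl a) (Sum.inr (Sum.inr p)) h h').1 hm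
  refine ⟨(Walk.pair (.fwd (reversedArrow D ⟨p.1.1, .inl p.2.1⟩))
    (.fwd (reversedArrow D ⟨p.1.2, .inr p.2.2.1⟩)) hβα.symm).cast h' h.symm, ?_⟩
  refine (hequiv_kerH_iff (phiQMap Q k) H _ _).2 ?_
  erw [QMap.mapWalk_single, QMap.mapWalk_cast, QMap.mapWalk_cast,
    QMap.mapWalk_pair, QMap.mapWalk_comp, QMap.mapWalk_cast]
  change HEquiv H ((Walk.pair (.bwd p.1.1) (.bwd p.1.2) hβα.symm).cast h' h.symm) _
  unfold HEquiv
  rw [Walk.inv_cast, Walk.inv_pair]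
  exact hH.comp_mem_comm hm'

theorem arrowInRange_kept (hH : IsHomotopy Q H) (hred : IsReducedH Q H)
    (a : {a : Q.Arrow // Q.src a ≠ k ∧ Q.tgt a ≠ k}) :
    (inclQMap (preMut Q k) D.deleted).ArrowInRange (preH Q H k) (.inl a) := by
  by_cases hc : (Sum.inl a : (preMut Q k).Arrow) ∈ D.deleted
  · obtain ⟨d, h, h', hm⟩ := D.exists_twoCycle_mem (preH_isHomotopy hH) hc
    rcases d with b | b | p
    · exact (hred a.1 b.1 h h' ((twoCycle_mem_kerH_iff _ _ h h').1 hm)).elim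
    · exact (b.2.elim (fun hb => a.2.1 (h'.symm.trans hb)) (fun hb => a.2.2 (h.trans hb))).elim
    · exact arrowInRange_of_twoCycle_composite D p hH a h h' hm
  · exact inclQMap_arrowInRange (preH_isHomotopy hH) hc

end Mutation

theorem incl_functor_full_general {V : Type} (Q : Quiv V) (H : HSet Q) (k : V)
    (hH : IsHomotopy Q H) (hred : IsReducedH Q H)
    (D : TwoCycleDeletion (preMut Q k) (preH Q H k) k) :
    ∀ (x y : V) (w : Walk (preMut Q k) x y),
      ∃ u : Walk (mutQuiv Q H k D) x y,
        HEquiv (preH Q H k) ((inclQMap (preMut Q k) D.deleted).mapWalk u) w := by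
  refine QMap.full_of_forall_arrowInRange (preH_isHomotopy hH) ?_
  rintro (a | a | p)
  · exact arrowInRange_kept D hH hred a
  · exact inclQMap_arrowInRange (preH_isHomotopy hH) (D.reversed_not_mem_deleted a)
  · exact arrowInRange_composite D p hH

/-- **The functor `ψ : π(Q†) → π(Q')/H'` is full** (Lemma `lemma: surjective grp map`).
Let `(Q, H)` be a loop-free quiver with reduced homotopy, `k` a vertex,
`(Q', H') = μ̃_k(Q, H)` the pre-mutation and `Q†` obtained from `Q'` by a maximal iterative
deletion `D` of `2`-cycles lying in `H'`.  Then the functor induced by the inclusion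
`Q† ⊆ Q'` is surjective on all morphism sets of `π(Q')/H'`: every walk in `Q'` is
`H'`-equivalent to the image of a walk in `Q†`. -/
theorem incl_functor_full {V : Type} (Q : Quiv V) (H : HSet Q) (k : V)
    (hlf : Q.LocallyFinite) (hloop : Q.LoopFree)
    (hH : IsHomotopy Q H) (hred : IsReducedH Q H)
    (D : TwoCycleDeletion (preMut Q k) (preH Q H k) k) (hD : D.Maximal) :
    ∀ (x y : V) (w : Walk (preMut Q k) x y),
      ∃ u : Walk (mutQuiv Q H k D) x y,
        HEquiv (preH Q H k) ((inclQMap (preMut Q k) D.deleted).mapWalk u) w :=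
  incl_functor_full_general Q H k hH hred D

end CMu
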